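/- Let n ≥ 2 and ℓ ≥ 1, let λ be a partition with at most n parts that is restricted of level ℓ, and let L be a level-ℓ restricted multiplicity array. Then for every ν ∈ C^ℓ(L,λ) and every t ∈ CST(λ'), the modified vacancy numbers vanish for large row lengths: p_i^{(k)}(t) = 0 for all 1 ≤ k ≤ n−1 and all i ≥ ℓ. -/

import Mathlib

/-!
For `i ≥ ℓ` every part of `ν` and every row length of `L` is at most `i`, so each `min(i, j)`
in `p_i^{(k)}` is `j`. Subtracting the `(k+1)`-th from the `k`-th coordinate of the
configuration equation then gives `p_i^{(k)} = λ_k - λ_{k+1}`. The entries of `t` are at most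
`λ_1 - λ_n`, so `ℓ̃ + t_{j,k} ≤ ℓ` and both correction sums count whole columns of `λ'`,
contributing `-(λ_k - λ_n) + (λ_{k+1} - λ_n)`.
-/

open scoped BigOperators Classical

noncomputable section

namespace XM

/-! ### Type `A_{n-1}` root data -/

/-- The Cartan pairing `(α_a | α_b)` of type `A`. -/
def cartan (a b : ℕ) : ℤ :=
  if a = b then 2 else if a + 1 = b ∨ b + 1 = a then -1 else 0

/-- the `c`-th coordinate of the simple root `α_a = ε_a - ε_{a+1}` (coordinates `1,…,n`). -/
def alphaCoord (a c : ℕ) : ℤ := if c = a then 1 else if c = a + 1 then -1 else 0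

/-- the `c`-th coordinate of the fundamental weight `Λ_a = ε_1 + ⋯ + ε_a`. -/
def LambdaCoord (a c : ℕ) : ℤ := if 1 ≤ c ∧ c ≤ a then 1 else 0

/-! ### Multiplicity arrays and compositions -/

/-- A multiplicity array: `L a i` is the number of tensor factors `B^{a,i}`. -/
abbrev MultArray := ℕ → ℕ → ℕ

/-- A valid multiplicity array for rank data `n`: finite support contained in
`{1,…,n-1} × ℤ_{>0}`. -/
def MultArray.IsValid (n : ℕ) (L : MultArray) : Prop :=
  (Function.support fun p : ℕ × ℕ => L p.1 p.2).Finite ∧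
    ∀ a i, L a i ≠ 0 → 1 ≤ a ∧ a ≤ n - 1 ∧ 1 ≤ i

/-- An `n`-tuple of nonnegative integers, encoded as a function supported on `{1,…,n}`. -/
def IsComp (n : ℕ) (lam : ℕ → ℕ) : Prop := ∀ c, lam c ≠ 0 → 1 ≤ c ∧ c ≤ n

/-- A partition with at most `n` parts, encoded as a weakly decreasing function
supported on `{1,…,n}`. -/
def IsPartitionOn (n : ℕ) (lam : ℕ → ℕ) : Prop :=
  IsComp n lam ∧ ∀ c, 1 ≤ c → lam (c + 1) ≤ lam c

/-! ### Configurations -/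

/-- A sequence of partitions `ν = (ν^{(a)})`, each partition recorded as the multiset of
its parts. -/
abbrev Config := ℕ → Multiset ℕ

/-- The sequence of partitions is supported on `a ∈ {1,…,n-1}` and all parts are positive. -/
def Config.IsValidShape (n : ℕ) (ν : Config) : Prop :=
  (∀ a, ¬(1 ≤ a ∧ a ≤ n - 1) → ν a = 0) ∧ ∀ a, ∀ i ∈ ν a, 1 ≤ i

/-- `m_i^{(a)}`: the number of parts of size `i` in `ν^{(a)}`. -/
def mNum (ν : Config) (a i : ℕ) : ℕ := (ν a).count i

/-- The vacancy numbers
`p_i^{(a)} = Σ_j min(i,j) L_j^{(a)} - Σ_{(b,j)} (α_a|α_b) min(i,j) m_j^{(b)}`. -/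
def vac (n : ℕ) (L : MultArray) (ν : Config) (a i : ℕ) : ℤ :=
  (∑ᶠ j : ℕ, (min i j : ℤ) * L a j) -
    ∑ b ∈ Finset.Icc 1 n, cartan a b * ((ν b).map fun j => (min i j : ℤ)).sum

/-- `ν` is an `(L,λ)`-configuration:
`Σ_{(a,i)} i m_i^{(a)} α_a = Σ_{(a,i)} i L_i^{(a)} Λ_a - λ` (coordinatewise). -/
def IsConfig (n : ℕ) (L : MultArray) (lam : ℕ → ℕ) (ν : Config) : Prop :=
  Config.IsValidShape n ν ∧
    ∀ c ∈ Finset.Icc 1 n,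
      (∑ a ∈ Finset.Icc 1 (n - 1), ((ν a).map fun i => (i : ℤ) * alphaCoord a c).sum) =
        (∑ a ∈ Finset.Icc 1 (n - 1), ∑ᶠ i : ℕ, (i : ℤ) * L a i * LambdaCoord a c) - lam c

/-- `ν` is admissible: all vacancy numbers are nonnegative. -/
def Admissible (n : ℕ) (L : MultArray) (ν : Config) : Prop :=
  ∀ a ∈ Finset.Icc 1 (n - 1), ∀ i, 1 ≤ i → 0 ≤ vac n L ν a i

/-- The cocharge
`cc(ν) = (1/2) Σ_{a,b} Σ_{j,k} (α_a|α_b) min(j,k) m_j^{(a)} m_k^{(b)}` of a configuration. -/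
def ccConf (n : ℕ) (ν : Config) : ℚ :=
  (1 / 2 : ℚ) * ∑ a ∈ Finset.Icc 1 (n - 1), ∑ b ∈ Finset.Icc 1 (n - 1),
    (cartan a b : ℚ) * ((ν a).map fun j => ((ν b).map fun k => (min j k : ℚ)).sum).sum

/-! ### Rigged configurations -/

/-- A rigged configuration: for each `a`, the multiset of strings `(length, label)` of the
`a`-th rigged partition `(ν,J)^{(a)}`. -/
abbrev RiggedConf := ℕ → Multiset (ℕ × ℤ)

/-- The underlying configuration of a rigged configuration. -/
def shape (rc : RiggedConf) : Config := fun a => (rc a).map Prod.fst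

/-- The cocharge `cc(ν,J) = cc(ν) + Σ |J^{(a,i)}|` of a rigged configuration. -/
def ccRC (n : ℕ) (rc : RiggedConf) : ℚ :=
  ccConf n (shape rc) + ∑ a ∈ Finset.Icc 1 (n - 1), ((rc a).map fun s => (s.2 : ℚ)).sum

/-- Membership in `RC̄(L,λ)`: the underlying configuration is an admissible
`(L,λ)`-configuration, and every label `x` of a string of length `i` of `(ν,J)^{(a)}`
satisfies `0 ≤ x ≤ p_i^{(a)}`. -/
def InRCbar (n : ℕ) (L : MultArray) (lam : ℕ → ℕ) (rc : RiggedConf) : Prop :=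
  IsConfig n L lam (shape rc) ∧ Admissible n L (shape rc) ∧
    ∀ a, ∀ s ∈ rc a, 0 ≤ s.2 ∧ s.2 ≤ vac n L (shape rc) a s.1

/-! ### Crystal operators on rigged configurations -/

/-- The set of labels occurring in the `a`-th rigged partition. -/
def labels (rc : RiggedConf) (a : ℕ) : Set ℤ := {x | ∃ i, (i, x) ∈ rc a}

/-- Adjust labels to keep colabels fixed after adding a box at a string of length `k`
of the `a`-th rigged partition: the vacancy numbers change by `-(α_a|α_b) χ(i > k)`. -/
def adjustDown (k : ℕ) (c : ℤ) (M : Multiset (ℕ × ℤ)) : Multiset (ℕ × ℤ) :=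
  M.map fun s => (s.1, s.2 - c * (if k < s.1 then 1 else 0))

/-- Adjust labels to keep colabels fixed after removing a box from a string of length `k`
of the `a`-th rigged partition: the vacancy numbers change by `+(α_a|α_b) χ(i ≥ k)`. -/
def adjustUp (k : ℕ) (c : ℤ) (M : Multiset (ℕ × ℤ)) : Multiset (ℕ × ℤ) :=
  M.map fun s => (s.1, s.2 + c * (if k ≤ s.1 then 1 else 0))

/-- The crystal operator `f_a` on rigged configurations. A box is added to the string of
largest length `k` among the strings of `(ν,J)^{(a)}` with the smallest nonpositive label
(a new string `(1,-1)` is created when no nonpositive label exists); the new label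
decreases by one and all other colabels are kept fixed.  The result is `none` if some
label of the result exceeds its vacancy number. -/
def fRC (n : ℕ) (L : MultArray) (a : ℕ) (rc : RiggedConf) : Option RiggedConf :=
  let x0 : ℤ := sInf (labels rc a)
  let hasNP : Prop := ∃ x ∈ labels rc a, x ≤ 0
  let k : ℕ := if hasNP then sSup {i | (i, x0) ∈ rc a} else 0
  let res : RiggedConf := fun b =>
    if b = a then
      adjustDown k (cartan a a) (if hasNP then (rc a).erase (k, x0) else rc a) +
        {(k + 1, (if hasNP then x0 else 0) - 1)}
    else adjustDown k (cartan a b) (rc b)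
  if ∀ b ∈ Finset.Icc 1 n, ∀ s ∈ res b, s.2 ≤ vac n L (shape res) b s.1 then some res
  else none

/-- The crystal operator `e_a` on rigged configurations. A box is removed from the string
of smallest length `k` among the strings of `(ν,J)^{(a)}` with the smallest negative
label; the new label increases by one and all other colabels are kept fixed.  The result
is `none` if no negative label exists. -/
def eRC (n : ℕ) (L : MultArray) (a : ℕ) (rc : RiggedConf) : Option RiggedConf :=
  let x0 : ℤ := sInf (labels rc a)
  if ∃ x ∈ labels rc a, x < 0 then
    let k : ℕ := sInf {i | (i, x0) ∈ rc a}
    some (fun b =>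
      if b = a then
        adjustUp k (cartan a a) ((rc a).erase (k, x0)) +
          (if k = 1 then 0 else {(k - 1, x0 + 1)})
      else adjustUp k (cartan a b) (rc b))
  else none

/-- The set `RC(L)` of unrestricted rigged configurations: generated from the sets
`RC̄(L,λ)` by the crystal operators `e_a`, `f_a`. -/
inductive InRC (n : ℕ) (L : MultArray) : RiggedConf → Prop
  | base (lam : ℕ → ℕ) (rc : RiggedConf) :
      IsComp n lam → InRCbar n L lam rc → InRC n L rc
  | fstep (a : ℕ) (rc rc' : RiggedConf) : a ∈ Finset.Icc 1 (n - 1) →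
      InRC n L rc → fRC n L a rc = some rc' → InRC n L rc'
  | estep (a : ℕ) (rc rc' : RiggedConf) : a ∈ Finset.Icc 1 (n - 1) →
      InRC n L rc → eRC n L a rc = some rc' → InRC n L rc'

/-- The weight `wt(ν,J) = Σ_{(a,i)} i (L_i^{(a)} Λ_a - m_i^{(a)} α_a)` (coordinate `c`). -/
def wtRC (n : ℕ) (L : MultArray) (rc : RiggedConf) (c : ℕ) : ℤ :=
  (∑ a ∈ Finset.Icc 1 (n - 1), ∑ᶠ i : ℕ, (i : ℤ) * L a i * LambdaCoord a c) -
    ∑ a ∈ Finset.Icc 1 (n - 1), ((rc a).map fun s => (s.1 : ℤ) * alphaCoord a c).sum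

/-- Membership in `RC(L,λ)`. -/
def InRCLam (n : ℕ) (L : MultArray) (lam : ℕ → ℕ) (rc : RiggedConf) : Prop :=
  InRC n L rc ∧ ∀ c ∈ Finset.Icc 1 n, wtRC n L rc c = (lam c : ℤ)

end XM
/-! ### Tableaux, words and path crystals -/

namespace XM

/-- A (filling of a) tableau, as its list of rows, top to bottom. -/
abbrev Tab := List (List ℕ)

/-- The entry of `t` in row `i`, column `j` (0-indexed); `0` outside. -/
def Tab.entry (t : Tab) (i j : ℕ) : ℕ := (t.getD i []).getD j 0

/-- `t` is a semistandard Young tableau with entries in `{1,…,n}`: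
rows weakly increase, columns strictly increase, row lengths weakly decrease. -/
def IsSSYT (n : ℕ) (t : Tab) : Prop :=
  (∀ row ∈ t, row ≠ [] ∧ row.Chain' (· ≤ ·) ∧ ∀ x ∈ row, 1 ≤ x ∧ x ≤ n) ∧
  (∀ i, i + 1 < t.length → (t.getD (i + 1) []).length ≤ (t.getD i []).length) ∧
  (∀ i j, i + 1 < t.length → j < (t.getD (i + 1) []).length →
    Tab.entry t i j < Tab.entry t (i + 1) j)

/-- `t` has rectangular shape `(s^r)`. -/
def IsRect (r s : ℕ) (t : Tab) : Prop :=
  t.length = r ∧ ∀ row ∈ t, row.length = s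

/-- The row-reading word of a tableau: rows read left to right, bottom to top. -/
def wordOf (t : Tab) : List ℕ := t.reverse.flatten

/-- One step of the bracketing procedure for the letters `a`, `a+1`: the state consists of
the stack of indices of so-far unbracketed letters `a+1` and the list of indices of
unbracketed letters `a`. -/
def bracketStep (a : ℕ) (st : List ℕ × List ℕ) (ic : ℕ × ℕ) : List ℕ × List ℕ :=
  if ic.2 = a + 1 then (ic.1 :: st.1, st.2)
  else if ic.2 = a then
    match st.1 with
    | [] => (st.1, st.2 ++ [ic.1])
    | _ :: rest => (rest, st.2)
  else st

/-- The result of bracketing all pairs `(a+1) a` in the word `w`. -/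
def bracketState (a : ℕ) (w : List ℕ) : List ℕ × List ℕ :=
  ((List.range w.length).zip w).foldl (bracketStep a) ([], [])

/-- The crystal operator `f_a` on words: the rightmost unbracketed letter `a` is changed
into `a+1`; undefined if there is none. -/
def fWord (a : ℕ) (w : List ℕ) : Option (List ℕ) :=
  match (bracketState a w).2.getLast? with
  | none => none
  | some i => some (w.set i (a + 1))

/-- The crystal operator `e_a` on words: the leftmost unbracketed letter `a+1` is changed
into `a`; undefined if there is none. -/
def eWord (a : ℕ) (w : List ℕ) : Option (List ℕ) :=
  match (bracketState a w).1.getLast? with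
  | none => none
  | some i => some (w.set i a)

/-- An element of a tensor product `B^{r_k,s_k} ⊗ ⋯ ⊗ B^{r_1,s_1}`, as the list
`[b_k, …, b_1]` of its tensor factors (leftmost factor first). -/
abbrev Path := List Tab

/-- The concatenated row-reading word `row(b_k) row(b_{k-1}) ⋯ row(b_1)`. -/
def pathWord (b : Path) : List ℕ := (b.map wordOf).flatten

/-- The list of shapes `[(r_k,s_k), …, (r_1,s_1)]` is valid for rank data `n`. -/
def ValidRS (n : ℕ) (RS : List (ℕ × ℕ)) : Prop :=
  ∀ p ∈ RS, 1 ≤ p.1 ∧ p.1 ≤ n - 1 ∧ 1 ≤ p.2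

/-- `b` is an element of the tensor product of KR crystals with shape list `RS`. -/
def IsPath (n : ℕ) (RS : List (ℕ × ℕ)) (b : Path) : Prop :=
  b.length = RS.length ∧
    ∀ i < RS.length,
      IsRect (RS.getD i (0, 0)).1 (RS.getD i (0, 0)).2 (b.getD i []) ∧
        IsSSYT n (b.getD i [])

/-- The multiplicity array of the tensor product with shape list `RS`. -/
def multOf (RS : List (ℕ × ℕ)) : MultArray := fun a i => RS.count (a, i)

/-- The weight of a path: `wt(b)_c` is the number of letters `c` in `b`. -/
def wtPath (b : Path) (c : ℕ) : ℕ := (pathWord b).count c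

/-- `b` is classically highest weight: `e_a(b) = 0` for all `1 ≤ a ≤ n-1`. -/
def IsHighest (n : ℕ) (b : Path) : Prop :=
  ∀ a ∈ Finset.Icc 1 (n - 1), eWord a (pathWord b) = none

/-- The set `P(B,λ)` of unrestricted paths. -/
def PathSet (n : ℕ) (RS : List (ℕ × ℕ)) (lam : ℕ → ℕ) : Set Path :=
  {b | IsPath n RS b ∧ ∀ c, wtPath b c = lam c}

/-- The set `P̄(B,λ)` of classically restricted paths. -/
def PathBarSet (n : ℕ) (RS : List (ℕ × ℕ)) (lam : ℕ → ℕ) : Set Path :=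
  {b | b ∈ PathSet n RS lam ∧ IsHighest n b}

/-! ### Schensted insertion and energy functions -/

/-- Row insertion of a letter into a row: the leftmost entry strictly greater than `x` is
bumped. -/
def rowInsert (x : ℕ) (row : List ℕ) : List ℕ × Option ℕ :=
  match row.findIdx? (fun y => decide (x < y)) with
  | none => (row ++ [x], none)
  | some i => (row.set i x, some (row.getD i 0))

/-- Schensted insertion of a letter into a tableau. -/
def tabInsert : Tab → ℕ → Tab
  | [], x => [[x]]
  | row :: rest, x =>
    match rowInsert x row with
    | (row', none) => row' :: rest
    | (row', some y) => row' :: tabInsert rest y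

/-- The Schensted product `b ⬝ b'`: the word of `b'` is row inserted into `b`. -/
def tabProduct (b b' : Tab) : Tab := (wordOf b').foldl tabInsert b

/-- The local energy `H(b ⊗ b')` for `b ∈ B^{r,s}`, `b' ∈ B^{r',s'}`: the number of boxes
of the shape of `b ⬝ b'` outside the concatenation of `(s^r)` and `((s')^{r'})`. -/
def localH (r s r' s' : ℕ) (b b' : Tab) : ℕ :=
  ∑ i ∈ Finset.range (tabProduct b b').length,
    (((tabProduct b b').getD i []).length -
      ((if i < r then s else 0) + (if i < r' then s' else 0)))

/-- A tensor factor together with its rectangular shape `((r,s), tableau)`. -/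
abbrev Fact := (ℕ × ℕ) × Tab

/-- The combinatorial `R`-matrix on a pair of factors (`x` the left, `y` the right
factor): the unique pair with exchanged shapes and the same Schensted product. -/
def Rpair (n : ℕ) (x y : Fact) : Fact × Fact :=
  if h : ∃ p : Tab × Tab, IsRect y.1.1 y.1.2 p.1 ∧ IsSSYT n p.1 ∧
      IsRect x.1.1 x.1.2 p.2 ∧ IsSSYT n p.2 ∧
      tabProduct p.1 p.2 = tabProduct x.2 y.2 then
    ((y.1, h.choose.1), (x.1, h.choose.2))
  else ((y.1, y.2), (x.1, x.2))

/-- The combinatorial `R`-matrix `R_i` acting on tensor positions `i`, `i+1`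
(positions counted from the right, starting with `1`). -/
def applyR (n i : ℕ) (b : List Fact) : List Fact :=
  let k := b.length
  let x := b.getD (k - i - 1) default
  let y := b.getD (k - i) default
  let p := Rpair n x y
  (b.set (k - i - 1) p.1).set (k - i) p.2

/-- The local energy `H_i` evaluated at tensor positions `i`, `i+1`. -/
def Hat (n i : ℕ) (b : List Fact) : ℕ :=
  let x := b.getD (b.length - i - 1) default
  let y := b.getD (b.length - i) default
  localH x.1.1 x.1.2 y.1.1 y.1.2 x.2 y.2

/-- The composite `R_{j-2} ⋯ R_{i+1} R_i`. -/
def Rchain (n i j : ℕ) (b : List Fact) : List Fact :=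
  (List.range' i (j - 1 - i)).foldl (fun acc t => applyR n t acc) b

/-- The tail energy `D = Σ_{1 ≤ i < j ≤ k} H_{j-1} R_{j-2} ⋯ R_{i+1} R_i`. -/
def tailD (n : ℕ) (b : List Fact) : ℕ :=
  ∑ j ∈ Finset.Icc 1 b.length, ∑ i ∈ Finset.Ico 1 j, Hat n (j - 1) (Rchain n i j b)

/-- The tail energy of a path with shape list `RS`. -/
def pathD (n : ℕ) (RS : List (ℕ × ℕ)) (b : Path) : ℕ := tailD n (RS.zip b)

end XM
/-! ### The Kirillov–Schilling–Shimozono bijection data -/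

namespace XM

/-- The multiplicity array of `lh(B)`: one factor `B^{1,1}` removed. -/
def lhL (L : MultArray) : MultArray := fun a i => if a = 1 ∧ i = 1 then L a i - 1 else L a i

/-- Lengths `i ≥ lo` of singular strings of `(ν,J)^{(a)}`. -/
def singSet (n : ℕ) (L : MultArray) (rc : RiggedConf) (a lo : ℕ) : Set ℕ :=
  {i | lo ≤ i ∧ (i, vac n L (shape rc) a i) ∈ rc a}

/-- The lengths `ℓ^{(a)}` selected by the algorithm `δ` (with `0` encoding `∞`,
i.e. that the algorithm stopped before reaching `a`). -/
def ellDelta (n : ℕ) (L : MultArray) (rc : RiggedConf) : ℕ → ℕ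
  | 0 => 1
  | a + 1 =>
    if ellDelta n L rc a = 0 then 0
    else if (singSet n L rc (a + 1) (ellDelta n L rc a)).Nonempty then
      sInf (singSet n L rc (a + 1) (ellDelta n L rc a))
    else 0

/-- The rank `rk(ν,J)`: the first `a` where the algorithm `δ` stops. -/
def rkDelta (n : ℕ) (L : MultArray) (rc : RiggedConf) : ℕ :=
  sInf {a | 1 ≤ a ∧ ellDelta n L rc a = 0}

/-- The map `δ` on rigged configurations: one box is removed from a singular string of
length `ℓ^{(a)}` for every `a < rk`, the shortened strings are made singular again
(with respect to the reduced multiplicity array `lh(L)`), and all other labels are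
unchanged. -/
def deltaRC (n : ℕ) (L : MultArray) (rc : RiggedConf) : RiggedConf :=
  let ell := ellDelta n L rc
  let rk := rkDelta n L rc
  let shape' : Config := fun a =>
    if 1 ≤ a ∧ a < rk then
      (shape rc a).erase (ell a) + (if ell a = 1 then 0 else {ell a - 1})
    else shape rc a
  fun a =>
    if 1 ≤ a ∧ a < rk then
      (rc a).erase (ell a, vac n L (shape rc) a (ell a)) +
        (if ell a = 1 then 0 else {(ell a - 1, vac n (lhL L) shape' a (ell a - 1))})
    else rc a

/-- The map `j` on rigged configurations corresponding to box-splitting: a singular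
string of length `1` is added to `(ν,J)^{(a)}` for every `1 ≤ a < r`. -/
def jMap (n : ℕ) (L' : MultArray) (r : ℕ) (rc : RiggedConf) : RiggedConf :=
  let shape' : Config := fun b => shape rc b + (if 1 ≤ b ∧ b < r then {1} else 0)
  fun b => rc b + (if 1 ≤ b ∧ b < r then {(1, vac n L' shape' b 1)} else 0)

/-- The first column of a rectangular tableau, as an `r × 1` tableau. -/
def firstColumn (t : Tab) : Tab := t.map fun row => [row.getD 0 0]

/-- The remaining columns of a rectangular tableau. -/
def restColumns (t : Tab) : Tab := t.map fun row => row.drop 1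

/-- `Φ` is the Kirillov–Schilling–Shimozono family of maps from classically restricted
paths to rigged configurations: the empty path maps to the empty rigged configuration and
the diagrams `Φ∘lh = δ∘Φ`, `Φ∘ls = i∘Φ` and `Φ∘lb = j∘Φ` commute; moreover `Φ` maps
`P̄(B,λ)` into `RC̄(L,λ)`. -/
def IsKSS (n : ℕ) (Φ : List (ℕ × ℕ) → Path → RiggedConf) : Prop :=
  (Φ [] [] = fun _ => 0) ∧
  (∀ RS lam b, ValidRS n RS → b ∈ PathBarSet n RS lam →
      InRCbar n (multOf RS) lam (Φ RS b)) ∧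
  (∀ RS' lam t b, ValidRS n ((1, 1) :: RS') →
      (t :: b) ∈ PathBarSet n ((1, 1) :: RS') lam →
      deltaRC n (multOf ((1, 1) :: RS')) (Φ ((1, 1) :: RS') (t :: b)) = Φ RS' b) ∧
  (∀ r s RS' lam t b, 2 ≤ s → ValidRS n ((r, s) :: RS') →
      (t :: b) ∈ PathBarSet n ((r, s) :: RS') lam →
      Φ ((r, s) :: RS') (t :: b) =
        Φ ((r, 1) :: (r, s - 1) :: RS') (firstColumn t :: restColumns t :: b)) ∧
  (∀ r RS' lam t b, 2 ≤ r → ValidRS n ((r, 1) :: RS') →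
      (t :: b) ∈ PathBarSet n ((r, 1) :: RS') lam →
      Φ ((1, 1) :: (r - 1, 1) :: RS') ([t.getD (r - 1) []] :: t.dropLast :: b) =
        jMap n (multOf ((1, 1) :: (r - 1, 1) :: RS')) r (Φ ((r, 1) :: RS') (t :: b)))

/-! ### Promotion -/

/-- Iteration of the crystal operator `f_a` on rigged configurations. -/
def fIter (n : ℕ) (L : MultArray) (a : ℕ) : ℕ → RiggedConf → Option RiggedConf
  | 0, rc => some rc
  | k + 1, rc => (fRC n L a rc).bind (fIter n L a k)

/-- Step (1) of the promotion on rigged configurations: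
`(ν',J') = f_1^{λ_1} f_2^{λ_2} ⋯ f_n^{λ_n} (ν,J)`, where `f_n` acts on the adjoined
empty `n`-th rigged partition. -/
def prePr (n : ℕ) (L : MultArray) (lam : ℕ → ℕ) (rc : RiggedConf) : Option RiggedConf :=
  (List.range n).foldl (fun acc m => acc.bind (fIter n L (n - m) (lam (n - m)))) (some rc)

/-- The lengths `ℓ^{(n)}, ℓ^{(n-1)}, …` selected by the algorithm `ρ` (`rhoEll m` is
`ℓ^{(n-m)}`, with `0` encoding failure). -/
def rhoEll (n : ℕ) (L : MultArray) (rc : RiggedConf) : ℕ → ℕ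
  | 0 => if (singSet n L rc n 1).Nonempty then sInf (singSet n L rc n 1) else 0
  | m + 1 =>
    if rhoEll n L rc m = 0 then 0
    else if (singSet n L rc (n - (m + 1)) (rhoEll n L rc m)).Nonempty then
      sInf (singSet n L rc (n - (m + 1)) (rhoEll n L rc m))
    else 0

/-- Step (2) of the promotion, the algorithm `ρ`: for `k = n, n-1, …, 1` a singular
string of minimal length `ℓ^{(k)} ≥ ℓ^{(k+1)}` is selected in `(ν',J')^{(k)}`; each
selected string is shortened by one box and made singular again. -/
def rhoRC (n : ℕ) (L : MultArray) (rc : RiggedConf) : Option RiggedConf :=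
  let ell : ℕ → ℕ := fun k => rhoEll n L rc (n - k)
  if ∀ k ∈ Finset.Icc 1 n, ell k ≠ 0 then
    let shape' : Config := fun k =>
      if 1 ≤ k ∧ k ≤ n then
        (shape rc k).erase (ell k) + (if ell k = 1 then 0 else {ell k - 1})
      else shape rc k
    some (fun k =>
      if 1 ≤ k ∧ k ≤ n then
        (rc k).erase (ell k, vac n L (shape rc) k (ell k)) +
          (if ell k = 1 then 0 else {(ell k - 1, vac n L shape' k (ell k - 1))})
      else rc k)
  else none

/-- Iteration of `ρ`. -/
def rhoIter (n : ℕ) (L : MultArray) : ℕ → RiggedConf → Option RiggedConf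
  | 0, rc => some rc
  | k + 1, rc => (rhoRC n L rc).bind (rhoIter n L k)

/-- The promotion operator on rigged configurations of weight `λ`. -/
def prRC (n : ℕ) (L : MultArray) (lam : ℕ → ℕ) (rc : RiggedConf) : Option RiggedConf :=
  (prePr n L lam rc).bind (rhoIter n L (lam n))

/-- The promotion operator with the weight read off from the rigged configuration. -/
def prAuto (n : ℕ) (L : MultArray) (rc : RiggedConf) : Option RiggedConf :=
  prRC n L (fun c => (wtRC n L rc c).toNat) rc

/-- One jeu-de-taquin slide of a hole at `(i,j)` in the grid `g` (`0` = empty cell): the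
larger of the neighbours above and to the left moves into the hole (the one above in
case of a tie), and the slide continues until both neighbours are empty. -/
def slideAux : ℕ → (ℕ → ℕ → ℕ) → ℕ → ℕ → (ℕ → ℕ → ℕ)
  | 0, g, _, _ => g
  | fuel + 1, g, i, j =>
    let u := if i = 0 then 0 else g (i - 1) j
    let l := if j = 0 then 0 else g i (j - 1)
    if u = 0 ∧ l = 0 then g
    else if u < l then
      slideAux fuel
        (fun p q => if p = i ∧ q = j then l else if p = i ∧ q = j - 1 then 0 else g p q)
        i (j - 1)
    else
      slideAux fuel
        (fun p q => if p = i ∧ q = j then u else if p = i - 1 ∧ q = j then 0 else g p q)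
        (i - 1) j

/-- The jeu-de-taquin promotion operator on a rectangular tableau with entries in
`{1,…,n}`: all letters `n` are deleted, the vacated cells are slid into the tableau by
jeu de taquin, all entries are increased by one and the empty cells are filled with `1`s. -/
def promTab (n : ℕ) (t : Tab) : Tab :=
  let r := t.length
  let s := (t.getD 0 []).length
  let g0 : ℕ → ℕ → ℕ := fun i j => if Tab.entry t i j = n then 0 else Tab.entry t i j
  let holes : List (ℕ × ℕ) :=
    ((List.range s).map fun j => (List.range r).filterMap fun i =>
      if Tab.entry t i j = n then some (i, j) else none).flatten
  let g1 := holes.foldl (fun g c => slideAux (c.1 + c.2 + 1) g c.1 c.2) g0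
  (List.range r).map fun i =>
    (List.range s).map fun j => if g1 i j = 0 then 1 else g1 i j + 1

/-- The promotion operator on a tensor product, acting factorwise. -/
def prPath (n : ℕ) (b : Path) : Path := b.map (promTab n)

/-- The relation `b' = e_0(b) = (pr⁻¹ ∘ e_1 ∘ pr)(b)` on paths with shape list `RS`. -/
def E0Rel (n : ℕ) (RS : List (ℕ × ℕ)) (b b' : Path) : Prop :=
  IsPath n RS b' ∧ eWord 1 (pathWord (prPath n b)) = some (pathWord (prPath n b'))

/-- `k`-fold relational composition. -/
def relPow {α : Type*} (R : α → α → Prop) : ℕ → α → α → Prop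
  | 0 => Eq
  | k + 1 => fun x z => ∃ y, R x y ∧ relPow R k y z

/-- The set `P^ℓ(B,λ)` of level-`ℓ` restricted paths: classically restricted paths with
`e_0^{ℓ+1}(b) = 0`. -/
def PathLevelSet (n ℓ : ℕ) (RS : List (ℕ × ℕ)) (lam : ℕ → ℕ) : Set Path :=
  {b | b ∈ PathBarSet n RS lam ∧ ¬∃ b', relPow (E0Rel n RS) (ℓ + 1) b b'}

/-! ### Level-restricted rigged configurations -/

/-- A column-strict tableau of shape `λ'` (the transpose of
`(λ_1-λ_n, …, λ_{n-1}-λ_n)`, whose `k`-th column has length `λ_k - λ_n`) with entries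
in `{1, …, λ_1-λ_n}`; `t j k` is the entry in row `j`, column `k` (1-indexed),
and `t` vanishes outside the diagram. -/
def IsCST (n : ℕ) (lam : ℕ → ℕ) (t : ℕ → ℕ → ℕ) : Prop :=
  (∀ j k, (1 ≤ k ∧ k ≤ n - 1 ∧ 1 ≤ j ∧ j ≤ lam k - lam n) →
      1 ≤ t j k ∧ t j k ≤ lam 1 - lam n) ∧
  (∀ j k, ¬(1 ≤ k ∧ k ≤ n - 1 ∧ 1 ≤ j ∧ j ≤ lam k - lam n) → t j k = 0) ∧
  (∀ j k, 1 ≤ k → k ≤ n - 1 → 1 ≤ j → j + 1 ≤ lam k - lam n → t j k < t (j + 1) k) ∧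
  (∀ j k, 1 ≤ k → k + 1 ≤ n - 1 → 1 ≤ j → j ≤ lam (k + 1) - lam n → t j k ≤ t j (k + 1))

/-- The modified vacancy numbers
`p_i^{(k)}(t) = p_i^{(k)} - Σ_j χ(i ≥ ℓ̃ + t_{j,k}) + Σ_j χ(i ≥ ℓ̃ + t_{j,k+1})`
with `ℓ̃ = ℓ - (λ_1 - λ_n)`. -/
def pMod (n ℓ : ℕ) (L : MultArray) (lam : ℕ → ℕ) (ν : Config) (t : ℕ → ℕ → ℕ)
    (k i : ℕ) : ℤ :=
  vac n L ν k i -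
    (∑ j ∈ Finset.Icc 1 (lam k - lam n),
      if (ℓ - (lam 1 - lam n)) + t j k ≤ i then (1 : ℤ) else 0) +
    ∑ j ∈ Finset.Icc 1 (lam (k + 1) - lam n),
      if (ℓ - (lam 1 - lam n)) + t j (k + 1) ≤ i then (1 : ℤ) else 0

/-- Membership in `C^ℓ(L,λ)`: admissible `(L,λ)`-configurations all of whose parts are
at most `ℓ`. -/
def InConfLevel (n ℓ : ℕ) (L : MultArray) (lam : ℕ → ℕ) (ν : Config) : Prop :=
  IsConfig n L lam ν ∧ Admissible n L ν ∧ ∀ k, ∀ i ∈ ν k, i ≤ ℓ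

/-- Membership in `RC^ℓ(L,λ)`: level-`ℓ` restricted rigged configurations.  The largest
label `x_i^{(k)}` of `J^{(k,i)}` (zero if empty) is bounded by the modified vacancy
number `p_i^{(k)}(t)` for some column-strict tableau `t` of shape `λ'`. -/
def InRCLevel (n ℓ : ℕ) (L : MultArray) (lam : ℕ → ℕ) (rc : RiggedConf) : Prop :=
  InRCbar n L lam rc ∧ (∀ k, ∀ i ∈ shape rc k, i ≤ ℓ) ∧
    ∃ t, IsCST n lam t ∧ ∀ k ∈ Finset.Icc 1 (n - 1), ∀ i, 1 ≤ i →
      0 ≤ pMod n ℓ L lam (shape rc) t k i ∧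
        ∀ s ∈ rc k, s.1 = i → s.2 ≤ pMod n ℓ L lam (shape rc) t k i

/-! ### Lower bounds for unrestricted rigged configurations -/

/-- The column lengths `c_k = λ_{k+1} + ⋯ + λ_n` of `λ'` (with `c_0 = c_1`). -/
def cLen (n : ℕ) (lam : ℕ → ℕ) (k : ℕ) : ℕ :=
  if k = 0 then ∑ j ∈ Finset.Icc 2 n, lam j else ∑ j ∈ Finset.Icc (k + 1) n, lam j

/-- The set `A(λ')`: fillings of `λ'` with strictly decreasing columns, the entries in
column `k` drawn from `{1, …, c_{k-1}}`; `t j k` is the entry in row `j`, column `k`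
(1-indexed), and `t` vanishes outside the diagram. -/
def IsALam (n : ℕ) (lam : ℕ → ℕ) (t : ℕ → ℕ → ℕ) : Prop :=
  (∀ j k, (1 ≤ k ∧ k ≤ n - 1 ∧ 1 ≤ j ∧ j ≤ cLen n lam k) →
      1 ≤ t j k ∧ t j k ≤ cLen n lam (k - 1)) ∧
  (∀ j k, ¬(1 ≤ k ∧ k ≤ n - 1 ∧ 1 ≤ j ∧ j ≤ cLen n lam k) → t j k = 0) ∧
  (∀ j k, 1 ≤ k → k ≤ n - 1 → 1 ≤ j → j + 1 ≤ cLen n lam k → t (j + 1) k < t j k)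

/-- The lower bound
`M_i^{(a)}(t) = -Σ_{j=1}^{c_a} χ(i ≥ t_{j,a}) + Σ_{j=1}^{c_{a+1}} χ(i ≥ t_{j,a+1})`. -/
def lowerBound (n : ℕ) (lam : ℕ → ℕ) (t : ℕ → ℕ → ℕ) (a i : ℕ) : ℤ :=
  -(∑ j ∈ Finset.Icc 1 (cLen n lam a), if t j a ≤ i then (1 : ℤ) else 0) +
    ∑ j ∈ Finset.Icc 1 (cLen n lam (a + 1)), if t j (a + 1) ≤ i then (1 : ℤ) else 0

/-- `M_i^{(a)}(S) = max {M_i^{(a)}(t) | t ∈ S}`. -/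
def lowerBoundS (n : ℕ) (lam : ℕ → ℕ) (S : Set (ℕ → ℕ → ℕ)) (a i : ℕ) : ℤ :=
  sSup ((fun t => lowerBound n lam t a i) '' S)

/-! ### q-binomial coefficients -/

/-- The `q`-binomial coefficient `[m+p choose m]_q`: the generating function of
partitions with at most `m` parts, each part at most `p`, as an element of
`AddMonoidAlgebra ℚ ℚ` (exponents in `ℚ`). -/
def qbin (m p : ℕ) : AddMonoidAlgebra ℚ ℚ :=
  ∑ᶠ μ ∈ {μ : Multiset ℕ | μ.card ≤ m ∧ ∀ x ∈ μ, 1 ≤ x ∧ x ≤ p},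
    AddMonoidAlgebra.single (μ.sum : ℚ) 1

/-- The `q`-binomial coefficient with the convention that it vanishes when `p < 0`. -/
def qbinZ (m : ℕ) (p : ℤ) : AddMonoidAlgebra ℚ ℚ :=
  if p < 0 then 0 else qbin m p.toNat

/-- The formal power `q^e` with `e : ℚ`. -/
def qPow (e : ℚ) : AddMonoidAlgebra ℚ ℚ := AddMonoidAlgebra.single e 1

end XM
/-! ### Miscellaneous maps used in the statements -/

namespace XM

/-- The pairing `⟨h_a, μ⟩ = μ_a - μ_{a+1}` with indices taken modulo `n`
(and `μ_0 = μ_n`). -/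
def hPair (n : ℕ) (μ : ℕ → ℤ) (a : ℕ) : ℤ :=
  let idx : ℕ → ℕ := fun b => if b % n = 0 then n else b % n
  μ (idx a) - μ (idx (a + 1))

/-- The antitableau `b^*`: every entry `c` is replaced by `n+1-c` and the filling is
rotated by 180 degrees. -/
def starTab (n : ℕ) (t : Tab) : Tab :=
  (t.map fun row => (row.map fun c => n + 1 - c).reverse).reverse

/-- The map `*` on paths: `b_k ⊗ ⋯ ⊗ b_1 ↦ b_1^* ⊗ ⋯ ⊗ b_k^*`. -/
def starPath (n : ℕ) (b : Path) : Path := (b.map (starTab n)).reverse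

/-- Complementation of the riggings: every string `(i,x)` of `(ν,J)^{(a)}` is replaced
by `(i, p_i^{(a)} - x)`. -/
def thetaRC (n : ℕ) (L : MultArray) (rc : RiggedConf) : RiggedConf :=
  fun a => (rc a).map fun s => (s.1, vac n L (shape rc) a s.1 - s.2)

/-- One classical crystal step (by some `e_a` or `f_a`, `a ∈ I`) between paths with
shape list `RS`. -/
def classicalStep (n : ℕ) (RS : List (ℕ × ℕ)) (x y : Path) : Prop :=
  IsPath n RS y ∧ ∃ a ∈ Finset.Icc 1 (n - 1),
    fWord a (pathWord x) = some (pathWord y) ∨ eWord a (pathWord x) = some (pathWord y)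

/-- The conjugate (transpose) partition of `λ`. -/
def conjPart (n : ℕ) (lam : ℕ → ℕ) (i : ℕ) : ℕ :=
  if 1 ≤ i then ((Finset.Icc 1 n).filter fun j => i ≤ lam j).card else 0

/-- `n(B) = Σ_{1 ≤ i < j ≤ k} min(s_i,s_j) min(r_i,r_j)` for the shape list
`RS = [(r_k,s_k), …, (r_1,s_1)]`. -/
def nB (RS : List (ℕ × ℕ)) : ℕ :=
  ∑ p ∈ Finset.range RS.length ×ˢ Finset.range RS.length,
    if p.1 < p.2 then
      min (RS.getD p.1 (0, 0)).2 (RS.getD p.2 (0, 0)).2 *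
        min (RS.getD p.1 (0, 0)).1 (RS.getD p.2 (0, 0)).1
    else 0

/-- The shape list obtained from `RS` by exchanging the factors at tensor positions
`i`, `i+1` (counted from the right). -/
def swapRS (RS : List (ℕ × ℕ)) (i : ℕ) : List (ℕ × ℕ) :=
  (RS.set (RS.length - i - 1) (RS.getD (RS.length - i) (0, 0))).set
    (RS.length - i) (RS.getD (RS.length - i - 1) (0, 0))

/-- The relation of reachability by crystal operators `f_a` on rigged configurations. -/
def fStepRel (n : ℕ) (L : MultArray) (x y : RiggedConf) : Prop :=
  ∃ a ∈ Finset.Icc 1 (n - 1), fRC n L a x = some y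

/-- The list of (positive) parts of the partition `λ`. -/
def shapeList (n : ℕ) (lam : ℕ → ℕ) : List ℕ :=
  ((List.range n).map fun i => lam (i + 1)).filter fun m => decide (m ≠ 0)

end XM
namespace XM

open Finset

/-- `Σ_j j L_j^{(a)}`. -/
def MultArray.weight (L : MultArray) (a : ℕ) : ℤ := ∑ᶠ j : ℕ, (j : ℤ) * L a j

theorem IsPartitionOn.le_of_le {n : ℕ} {lam : ℕ → ℕ} (hlam : IsPartitionOn n lam)
    {c d : ℕ} (hc : 1 ≤ c) (hcd : c ≤ d) : lam d ≤ lam c := by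
  induction d, hcd using Nat.le_induction with
  | base => exact le_rfl
  | succ d hcd ih => exact (hlam.2 d (hc.trans hcd)).trans ih

theorem cartan_eq_alphaCoord_sub (a b : ℕ) :
    cartan a b = alphaCoord b a - alphaCoord b (a + 1) := by
  unfold cartan alphaCoord
  split_ifs <;> omega

theorem LambdaCoord_sub_succ (a : ℕ) {c : ℕ} (hc : 1 ≤ c) :
    LambdaCoord a c - LambdaCoord a (c + 1) = if a = c then 1 else 0 := by
  unfold LambdaCoord
  split_ifs <;> omega

theorem finsum_mul_LambdaCoord (L : MultArray) (a c : ℕ) :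
    ∑ᶠ i : ℕ, (i : ℤ) * L a i * LambdaCoord a c = L.weight a * LambdaCoord a c := by
  unfold LambdaCoord MultArray.weight
  split_ifs <;> simp

/- In `vac` and `IsConfig`, `(ν b).map fun j => (… : ℤ)` elaborates as a map over the coerced
multiset `(ν b : Multiset ℤ)`, a `bind`; the next two lemmas unfold that coercion. -/
theorem sum_map_min_of_forall_le {s : Multiset ℕ} {i : ℕ} (h : ∀ j ∈ s, j ≤ i) :
    (s.map fun j => (min i j : ℤ)).sum = s.sum := by
  simp only [Multiset.bind_def, Multiset.pure_def, Multiset.bind_singleton, Multiset.map_map,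
    Nat.cast_multiset_sum]
  exact congrArg _ (Multiset.map_congr rfl fun j hj => min_eq_right (by exact_mod_cast h j hj))

theorem sum_map_natCast_mul (s : Multiset ℕ) (c : ℤ) :
    (s.map fun j => (j : ℤ) * c).sum = s.sum * c := by
  simp only [Multiset.bind_def, Multiset.pure_def, Multiset.bind_singleton, Multiset.map_map,
    Nat.cast_multiset_sum]
  exact Multiset.sum_map_mul_right

theorem vac_eq_of_le {n : ℕ} {L : MultArray} {ν : Config} {a i : ℕ}
    (hν : ∀ b, ∀ j ∈ ν b, j ≤ i) (hL : ∀ j, i < j → L a j = 0) :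
    vac n L ν a i = L.weight a - ∑ b ∈ Icc 1 n, cartan a b * (ν b).sum := by
  unfold vac MultArray.weight
  congr 1
  · refine finsum_congr fun j => ?_
    rcases le_or_gt j i with hj | hj
    · rw [min_eq_right (by exact_mod_cast hj)]
    · simp [hL j hj]
  · exact sum_congr rfl fun b _ => by rw [sum_map_min_of_forall_le (hν b)]

theorem IsConfig.sum_mul_alphaCoord {n : ℕ} {L : MultArray} {lam : ℕ → ℕ}
    {ν : Config} (h : IsConfig n L lam ν) {c : ℕ} (hc : c ∈ Icc 1 n) :
    ∑ a ∈ Icc 1 (n - 1), ((ν a).sum : ℤ) * alphaCoord a c =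
      ∑ a ∈ Icc 1 (n - 1), L.weight a * LambdaCoord a c - lam c := by
  simpa only [sum_map_natCast_mul, finsum_mul_LambdaCoord] using h.2 c hc

theorem IsConfig.sum_cartan_mul_sum {n : ℕ} {L : MultArray} {lam : ℕ → ℕ}
    {ν : Config} (h : IsConfig n L lam ν) {k : ℕ} (hk : k ∈ Icc 1 (n - 1)) :
    ∑ b ∈ Icc 1 n, cartan k b * (ν b).sum = L.weight k - lam k + lam (k + 1) := by
  obtain ⟨hk1, hkn⟩ := mem_Icc.mp hk
  have hn : n = n - 1 + 1 := by omega
  have hνn : ν n = 0 := h.1.1 n (by omega)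
  calc ∑ b ∈ Icc 1 n, cartan k b * (ν b).sum
      = ∑ b ∈ Icc 1 (n - 1), (((ν b).sum : ℤ) * alphaCoord b k -
          ((ν b).sum : ℤ) * alphaCoord b (k + 1)) := by
        rw [hn, sum_Icc_succ_top (by omega), ← hn, hνn, Multiset.sum_zero, Nat.cast_zero,
          mul_zero, add_zero]
        exact sum_congr rfl fun b _ => by rw [cartan_eq_alphaCoord_sub]; ring
    _ = ∑ a ∈ Icc 1 (n - 1), L.weight a * (LambdaCoord a k - LambdaCoord a (k + 1))
          - lam k + lam (k + 1) := by
        rw [sum_sub_distrib, h.sum_mul_alphaCoord (mem_Icc.mpr ⟨hk1, by omega⟩),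
          h.sum_mul_alphaCoord (mem_Icc.mpr ⟨by omega, by omega⟩)]
        simp only [mul_sub, sum_sub_distrib]
        ring
    _ = L.weight k - lam k + lam (k + 1) := by
        simp only [LambdaCoord_sub_succ _ hk1, mul_ite, mul_one, mul_zero, sum_ite_eq', hk,
          if_true]

theorem IsCST.sum_indicator_eq {n ℓ : ℕ} {lam : ℕ → ℕ} {t : ℕ → ℕ → ℕ} (ht : IsCST n lam t)
    (hlev : lam 1 ≤ lam n + ℓ) {k i : ℕ} (hk1 : 1 ≤ k) (hkn : k ≤ n) (hi : ℓ ≤ i) :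
    (∑ j ∈ Icc 1 (lam k - lam n),
      if (ℓ - (lam 1 - lam n)) + t j k ≤ i then (1 : ℤ) else 0) = (lam k - lam n : ℕ) := by
  rw [sum_congr rfl fun j hj => if_pos ?_, sum_const, Nat.card_Icc, nsmul_one,
    Nat.add_sub_cancel]
  obtain ⟨hj1, hj⟩ := mem_Icc.mp hj
  have hkn' : k ≤ n - 1 := by
    rcases hkn.lt_or_eq with hlt | rfl <;> omega
  have := (ht.1 j k ⟨hk1, hkn', hj1, hj⟩).2
  omega

theorem modified_vacancy_vanishes_general
    (n : ℕ) (ℓ : ℕ)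
    (lam : ℕ → ℕ) (hlam : IsPartitionOn n lam) (hlev : lam 1 ≤ lam n + ℓ)
    (L : MultArray) (hLlev : ∀ a i, ℓ < i → L a i = 0)
    (ν : Config) (hν : InConfLevel n ℓ L lam ν)
    (t : ℕ → ℕ → ℕ) (ht : IsCST n lam t) :
    ∀ k, 1 ≤ k → k ≤ n - 1 → ∀ i, ℓ ≤ i → pMod n ℓ L lam ν t k i = 0 := by
  intro k hk1 hkn i hi
  obtain ⟨hconf, -, hparts⟩ := hν
  have hvac : vac n L ν k i = lam k - lam (k + 1) := by
    rw [vac_eq_of_le (fun b j hj => (hparts b j hj).trans hi)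
        (fun j hj => hLlev k j (hi.trans_lt hj)),
      hconf.sum_cartan_mul_sum (mem_Icc.mpr ⟨hk1, hkn⟩)]
    ring
  rw [pMod, hvac, ht.sum_indicator_eq hlev hk1 (by omega) hi,
    ht.sum_indicator_eq hlev (by omega) (by omega) hi,
    Nat.cast_sub (hlam.le_of_le hk1 (by omega)),
    Nat.cast_sub (hlam.le_of_le (by omega : 1 ≤ k + 1) (by omega))]
  ring

/-- [SS:2001, Lemma 6.1].  For every `ν ∈ C^ℓ(L,λ)` and every
column-strict tableau `t ∈ CST(λ')`, the modified vacancy numbers vanish for `i ≥ ℓ`: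
`p_i^{(k)}(t) = 0` for all `1 ≤ k ≤ n-1`. -/
theorem modified_vacancy_vanishes
    (n : ℕ) (hn : 2 ≤ n) (ℓ : ℕ) (hl : 1 ≤ ℓ)
    (lam : ℕ → ℕ) (hlam : IsPartitionOn n lam) (hlev : lam 1 ≤ lam n + ℓ)
    (L : MultArray) (hL : MultArray.IsValid n L) (hLlev : ∀ a i, ℓ < i → L a i = 0)
    (ν : Config) (hν : InConfLevel n ℓ L lam ν)
    (t : ℕ → ℕ → ℕ) (ht : IsCST n lam t) :
    ∀ k, 1 ≤ k → k ≤ n - 1 → ∀ i, ℓ ≤ i → pMod n ℓ L lam ν t k i = 0 :=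
  modified_vacancy_vanishes_general n ℓ lam hlam hlev L hLlev ν hν t ht

end XM
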